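/- Let m, k be positive natural numbers, let c : ℝ^m → ℝ be continuous, and let x* ∈ [0,1]^m be the unique global minimizer of c over [0,1]^m. Then there exists a function δ : ℝ → ℝ with δ(ε) → 0 as ε → 0⁺ such that for every ε ≥ 0, for every map G : [0,1]^k → [0,1]^m for which there exists z̃ ∈ [0,1]^k with ‖G(z̃) − x*‖ ≤ ε, and for every global minimizer z* of c ∘ G over [0,1]^k, one has ‖G(z*) − x*‖ ≤ δ(ε). -/

import Mathlib

/-!
Take `δ(ε)` to be the largest distance from `x*` of a cube point whose cost does not exceed the
cost of some cube point within `ε` of `x*`; a latent minimizer `G(z*)` is such a point, witnessed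
by `G(z̃)`. This `δ` tends to `0` because the minimum is well posed: on the compact part of the cube
at distance `≥ η` from `x*` the cost stays above some `a > c(x*)`, while by continuity it stays
below `a` near `x*`.
-/

/-- The unit cube `[0,1]^n` in Euclidean space `ℝ^n`. -/
def unitCube (n : ℕ) : Set (EuclideanSpace ℝ (Fin n)) :=
  WithLp.ofLp ⁻¹' (Set.univ.pi fun _ => Set.Icc (0 : ℝ) 1)

open Set Filter Topology Metric

lemma isCompact_unitCube (n : ℕ) : IsCompact (unitCube n) :=
  (PiLp.homeomorph 2 (fun _ : Fin n => ℝ)).isCompact_preimage.mpr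
    (isCompact_univ_pi fun _ => isCompact_Icc)

section Recovery

variable {α β : Type*} [PseudoMetricSpace α] [LinearOrder β] {K : Set α} {c : α → β} {x₀ : α}

noncomputable def recoveryRadius (K : Set α) (c : α → β) (x₀ : α) (ε : ℝ) : ℝ :=
  sSup ((dist · x₀) '' {x ∈ K | ∃ y ∈ K, dist y x₀ ≤ ε ∧ c x ≤ c y})

theorem dist_le_recoveryRadius (hK : Bornology.IsBounded K) {x y : α} {ε : ℝ} (hx : x ∈ K)
    (hy : y ∈ K) (hyε : dist y x₀ ≤ ε) (hxy : c x ≤ c y) :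
    dist x x₀ ≤ recoveryRadius K c x₀ ε := by
  obtain ⟨r, hr⟩ := (isBounded_iff_subset_closedBall x₀).1 hK
  exact le_csSup ⟨r, forall_mem_image.2 fun x' hx' => hr hx'.1⟩ ⟨x, ⟨hx, y, hy, hyε, hxy⟩, rfl⟩

variable [TopologicalSpace β] [OrderClosedTopology β] [NoMaxOrder β]

theorem IsCompact.exists_pos_forall_dist_lt_of_strictMin (hK : IsCompact K)
    (hc : ContinuousOn c K) (hx₀ : x₀ ∈ K) (hmin : ∀ x ∈ K, x ≠ x₀ → c x₀ < c x)
    {η : ℝ} (hη : 0 < η) :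
    ∃ ε₀ > 0, ∀ y ∈ K, dist y x₀ < ε₀ → ∀ x ∈ K, c x ≤ c y → dist x x₀ < η := by
  have hfar : IsCompact (K ∩ {x | η ≤ dist x x₀}) :=
    hK.inter_right (isClosed_le continuous_const (continuous_id.dist continuous_const))
  obtain ⟨a, hx₀a, ha⟩ := hfar.exists_forall_le' (hc.mono inter_subset_left)
    fun x ⟨hxK, hxη⟩ => hmin x hxK fun h => hη.not_ge (by simpa [h] using hxη)
  obtain ⟨ε₀, hε₀, hnear⟩ := mem_nhdsWithin_iff.1
    ((hc x₀ hx₀).eventually_lt_const hx₀a)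
  refine ⟨ε₀, hε₀, fun y hy hyε x hx hxy => ?_⟩
  by_contra! hxη
  exact (hxy.trans_lt (hnear ⟨hyε, hy⟩)).not_ge (ha x ⟨hx, hxη⟩)

theorem IsCompact.tendsto_recoveryRadius (hK : IsCompact K)
    (hc : ContinuousOn c K) (hx₀ : x₀ ∈ K) (hmin : ∀ x ∈ K, x ≠ x₀ → c x₀ < c x) :
    Tendsto (recoveryRadius K c x₀) (𝓝[>] 0) (𝓝 0) := by
  refine Metric.tendsto_nhds.2 fun η hη => ?_
  obtain ⟨ε₀, hε₀, hwell⟩ := hK.exists_pos_forall_dist_lt_of_strictMin hc hx₀ hmin (half_pos hη)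
  filter_upwards [Ioo_mem_nhdsGT hε₀] with ε hε
  have hle : recoveryRadius K c x₀ ε ≤ η / 2 := Real.sSup_le
    (forall_mem_image.2 fun x ⟨hx, y, hy, hyε, hxy⟩ => (hwell y hy (hyε.trans_lt hε.2) x hx hxy).le)
    (half_pos hη).le
  have hnonneg : 0 ≤ recoveryRadius K c x₀ ε :=
    Real.sSup_nonneg (forall_mem_image.2 fun _ _ => dist_nonneg)
  rw [Real.dist_0_eq_abs, abs_of_nonneg hnonneg]
  linarith

end Recovery

theorem latent_search_recovers_minimizer_general
    (m k : ℕ)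
    (c : EuclideanSpace ℝ (Fin m) → ℝ) (hc : Continuous c)
    (xstar : EuclideanSpace ℝ (Fin m)) (hxstar : xstar ∈ unitCube m)
    (hmin : ∀ x ∈ unitCube m, c xstar ≤ c x)
    (huniq : ∀ x ∈ unitCube m, c x = c xstar → x = xstar) :
    ∃ δ : ℝ → ℝ,
      Filter.Tendsto δ (nhdsWithin 0 (Set.Ioi 0)) (nhds 0) ∧
      ∀ ε : ℝ, 0 ≤ ε →
        ∀ G : EuclideanSpace ℝ (Fin k) → EuclideanSpace ℝ (Fin m),
          Set.MapsTo G (unitCube k) (unitCube m) →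
          (∃ ztilde ∈ unitCube k, ‖G ztilde - xstar‖ ≤ ε) →
          ∀ zstar ∈ unitCube k, (∀ z ∈ unitCube k, c (G zstar) ≤ c (G z)) →
            ‖G zstar - xstar‖ ≤ δ ε := by
  have hstrict : ∀ x ∈ unitCube m, x ≠ xstar → c xstar < c x := fun x hx hne =>
    (hmin x hx).lt_of_ne fun h => hne (huniq x hx h.symm)
  refine ⟨recoveryRadius (unitCube m) c xstar,
    (isCompact_unitCube m).tendsto_recoveryRadius hc.continuousOn hxstar hstrict, ?_⟩
  rintro ε - G hG ⟨ztilde, hztilde, hclose⟩ zstar hzstar hopt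
  simp only [← dist_eq_norm] at hclose ⊢
  exact dist_le_recoveryRadius (isCompact_unitCube m).isBounded (hG hzstar) (hG hztilde) hclose
    (hopt ztilde hztilde)

/-- Lemma A.1 of the paper: if `x*` is the unique global minimizer of a continuous cost `c`
over `[0,1]^m`, then there is `δ : ℝ → ℝ` with `δ(ε) → 0` as `ε → 0⁺` such that for every
`ε ≥ 0`, every generative model `G : [0,1]^k → [0,1]^m` approximating `x*` within `ε`, and
every global minimizer `z*` of `c ∘ G` over `[0,1]^k`, one has `‖G(z*) − x*‖ ≤ δ(ε)`. -/
theorem latent_search_recovers_minimizer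
    (m k : ℕ) (hm : 0 < m) (hk : 0 < k)
    (c : EuclideanSpace ℝ (Fin m) → ℝ) (hc : Continuous c)
    (xstar : EuclideanSpace ℝ (Fin m)) (hxstar : xstar ∈ unitCube m)
    (hmin : ∀ x ∈ unitCube m, c xstar ≤ c x)
    (huniq : ∀ x ∈ unitCube m, c x = c xstar → x = xstar) :
    ∃ δ : ℝ → ℝ,
      Filter.Tendsto δ (nhdsWithin 0 (Set.Ioi 0)) (nhds 0) ∧
      ∀ ε : ℝ, 0 ≤ ε →
        ∀ G : EuclideanSpace ℝ (Fin k) → EuclideanSpace ℝ (Fin m),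
          Set.MapsTo G (unitCube k) (unitCube m) →
          (∃ ztilde ∈ unitCube k, ‖G ztilde - xstar‖ ≤ ε) →
          ∀ zstar ∈ unitCube k, (∀ z ∈ unitCube k, c (G zstar) ≤ c (G z)) →
            ‖G zstar - xstar‖ ≤ δ ε :=
  latent_search_recovers_minimizer_general m k c hc xstar hxstar hmin huniq
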